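/- arXiv:2403.00598 — 4 statements merged into one kernel-verified Lean document; each statement's English description precedes it below -/
import Mathlib

section
/- In every capacitated house allocation instance there exists a Pareto-optimal matching whose cardinality equals the maximum cardinality of a matching of the instance. -/
noncomputable section

open Finset

attribute [local instance] Classical.propDecidable

/-- `Better l x y` means the (optional) house `x` is strictly preferred to the (optional)
house `y` according to the strict preference list `l` (earlier in the list = more
preferred); being matched to any acceptable house is preferred to being unmatched. -/
def Better {H : Type*} (l : List H) : Option H → Option H → Prop
  | some h, some h' => h ∈ l ∧ l.idxOf h < l.idxOf h'
  | some h, none => h ∈ l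
  | none, _ => False

/-- A capacitated house allocation instance: each applicant `a` has a strict preference
list `pref a` over her acceptable houses (most preferred first, acceptable = on the list),
and each house `h` has a capacity `cap h`. -/
structure HA (A H : Type*) where
  pref : A → List H
  cap : H → ℕ

namespace HA

variable {A H : Type*} [Fintype A]

/-- A matching assigns to each applicant at most one acceptable house,
respecting the houses' capacities. -/
def IsMatching (I : HA A H) (M : A → Option H) : Prop :=
  (∀ a h, M a = some h → h ∈ I.pref a) ∧
  ∀ h, (univ.filter fun a => M a = some h).card ≤ I.cap h

/-- A matching is perfect if every applicant is matched. -/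
def Perfect (M : A → Option H) : Prop := ∀ a, (M a).isSome

/-- `M'` dominates `M` if strictly more applicants prefer `M'` to `M` than
prefer `M` to `M'`. -/
def Dominates (I : HA A H) (M' M : A → Option H) : Prop :=
  (univ.filter fun a => Better (I.pref a) (M a) (M' a)).card <
    (univ.filter fun a => Better (I.pref a) (M' a) (M a)).card

/-- A matching is popular if no matching dominates it. -/
def Popular (I : HA A H) (M : A → Option H) : Prop :=
  I.IsMatching M ∧ ∀ M', I.IsMatching M' → ¬ I.Dominates M' M

/-- `M'` Pareto-dominates `M` if every applicant is at least as well off in `M'`,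
and some applicant is strictly better off. -/
def ParetoDominates (I : HA A H) (M' M : A → Option H) : Prop :=
  (∀ a, M' a = M a ∨ Better (I.pref a) (M' a) (M a)) ∧
  ∃ a, Better (I.pref a) (M' a) (M a)

/-- A matching is Pareto-optimal if no matching Pareto-dominates it. -/
def ParetoOptimal (I : HA A H) (M : A → Option H) : Prop :=
  I.IsMatching M ∧ ∀ M', I.IsMatching M' → ¬ I.ParetoDominates M' M

/-- The cardinality of a matching: the number of matched applicants. -/
def size (M : A → Option H) : ℕ := (univ.filter fun a => (M a).isSome).card

/-- `f(a)`: the most preferred acceptable house of `a` (if any). -/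
def fOpt (I : HA A H) (a : A) : Option H := (I.pref a).head?

/-- The admirers of a house `h`: the applicants whose most preferred house is `h`. -/
def admirers (I : HA A H) (h : H) : Finset A := univ.filter fun a => I.fOpt a = some h

/-- `s(a)`: equals `f(a)` if `f(a)` has at most `cap (f a)` admirers; otherwise the
most preferred acceptable house of `a` having strictly fewer admirers than its
capacity; `none` if no such house exists. -/
def sOpt (I : HA A H) (a : A) : Option H :=
  match (I.pref a).head? with
  | none => none
  | some h =>
    if (I.admirers h).card ≤ I.cap h then some h
    else (I.pref a).find? fun h' => decide ((I.admirers h').card < I.cap h')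

/-- `(a, h)` is an edge of the first/second-choice multigraph `G'`. -/
def InG' (I : HA A H) (a : A) (h : H) : Prop := I.fOpt a = some h ∨ I.sOpt a = some h

/-- The set of applicants matched to house `h` in `M`. -/
def matchedTo (M : A → Option H) (h : H) : Finset A := univ.filter fun a => M a = some h

/-- An admissible matching: every edge lies in `G'`; every house having at least as many
admirers as its capacity is saturated by admirers only; and every house having at most
as many admirers as its capacity has all its admirers matched to it. -/
def Admissible (I : HA A H) (M : A → Option H) : Prop :=
  I.IsMatching M ∧
  (∀ a h, M a = some h → I.InG' a h) ∧
  (∀ h, I.cap h ≤ (I.admirers h).card →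
      (matchedTo M h).card = I.cap h ∧ ∀ a ∈ matchedTo M h, I.fOpt a = some h) ∧
  (∀ h, (I.admirers h).card ≤ I.cap h → ∀ a ∈ I.admirers h, M a = some h)

end HA


/-!
Among the matchings of maximum cardinality pick one, `M`, whose total rank (the sum over
applicants of the position of their house in their preference list, an unmatched applicant
counting as the length of the list) is least. A matching that Pareto-dominates `M` keeps every
matched applicant matched, so it is again of maximum cardinality, and it lowers the rank of
some applicant without raising any other, so its total rank is smaller: contradiction.
-/

def rank {H : Type*} (l : List H) : Option H → ℕ
  | some h => l.idxOf h
  | none => l.length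

theorem Better.isSome_left {H : Type*} {l : List H} {x y : Option H} (h : Better l x y) :
    x.isSome := by
  cases x with
  | none => exact h.elim
  | some _ => rfl

theorem Better.rank_lt {H : Type*} {l : List H} {x y : Option H} (h : Better l x y) :
    rank l x < rank l y := by
  match x, y, h with
  | some _, some _, h => exact h.2
  | some _, none, h => exact List.idxOf_lt_length_iff.mpr h

namespace HA

variable {A H : Type*} [Fintype A]

def totalRank (I : HA A H) (M : A → Option H) : ℕ := ∑ a, rank (I.pref a) (M a)

theorem isMatching_none (I : HA A H) : I.IsMatching fun _ => none :=
  ⟨fun _ _ h => (nomatch h), fun _ => by simp⟩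

theorem size_le_card (M : A → Option H) : size M ≤ Fintype.card A :=
  card_filter_le _ _

theorem exists_isMatching_forall_size_le (I : HA A H) :
    ∃ M, I.IsMatching M ∧ ∀ M', I.IsMatching M' → size M' ≤ size M := by
  set S := size '' {M | I.IsMatching M}
  have hS : BddAbove S := ⟨Fintype.card A, by rintro _ ⟨M, -, rfl⟩; exact size_le_card M⟩
  obtain ⟨M, hM, hMS⟩ := Nat.sSup_mem ⟨_, Set.mem_image_of_mem size I.isMatching_none⟩ hS
  exact ⟨M, hM, fun M' hM' => hMS ▸ le_csSup hS ⟨M', hM', rfl⟩⟩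

theorem ParetoDominates.size_le {I : HA A H} {M' M : A → Option H}
    (h : I.ParetoDominates M' M) : size M ≤ size M' := by
  refine card_le_card fun a ha => ?_
  simp only [mem_filter, mem_univ, true_and] at ha ⊢
  rcases h.1 a with heq | hbetter
  · rwa [heq]
  · exact hbetter.isSome_left

theorem ParetoDominates.totalRank_lt {I : HA A H} {M' M : A → Option H}
    (h : I.ParetoDominates M' M) : I.totalRank M' < I.totalRank M := by
  obtain ⟨hall, a, ha⟩ := h
  refine sum_lt_sum (fun b _ => ?_) ⟨a, mem_univ a, ha.rank_lt⟩
  rcases hall b with heq | hbetter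
  · rw [heq]
  · exact hbetter.rank_lt.le

end HA

/-- In every capacitated house allocation instance there exists a
Pareto-optimal matching whose cardinality equals the maximum cardinality of a matching. -/
theorem exists_paretoOptimal_of_max_size {A H : Type*} [Fintype A] (I : HA A H) :
    ∃ M, I.IsMatching M ∧ I.ParetoOptimal M ∧
      ∀ M', I.IsMatching M' → HA.size M' ≤ HA.size M := by
  obtain ⟨M₀, hM₀, hmax₀⟩ := I.exists_isMatching_forall_size_le
  obtain ⟨M, ⟨hM, hmax⟩, hmin⟩ := (InvImage.wf I.totalRank wellFounded_lt).has_min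
    {M | I.IsMatching M ∧ ∀ M', I.IsMatching M' → HA.size M' ≤ HA.size M} ⟨M₀, hM₀, hmax₀⟩
  refine ⟨M, hM, ⟨hM, fun M' hM' hdom => ?_⟩, hmax⟩
  have hmax' : ∀ N, I.IsMatching N → HA.size N ≤ HA.size M' :=
    fun N hN => (hmax N hN).trans hdom.size_le
  exact hmin M' ⟨hM', hmax'⟩ hdom.totalRank_lt
end
end

section
/- Let I = (A, H, (≻_a), q) be a capacitated house allocation instance with n = |A| applicants in which every applicant has at least one acceptable house, and let x be the maximum cardinality of a matching of I. Then: (i) there exists a capacity increase vector r ≥ 0 with |r|_1 = n − x such that the instance with capacities q + r admits a matching that is both perfect and Pareto-optimal; and (ii) for every capacity change vector r with |r|_1 < n − x, the instance with capacities q + r admits no perfect matching (hence no perfect Pareto-optimal matching). -/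
noncomputable section

open Finset

attribute [local instance] Classical.propDecidable

/-!
Call a map `N : A → H` sending every applicant to an acceptable house an assignment; it
ignores capacities, and its overflow at `h` is the number of applicants it sends to `h` beyond
`q h`. Dropping the overflowing applicants turns an assignment into a matching, so every
assignment overflows by at least `n - x` in total. Conversely, a perfect matching under `q + r`
is an assignment whose overflow at each house is at most `|r h|`, which gives (ii). Extending a
maximum matching by sending each unmatched applicant to her first choice gives an assignment
of total overflow at most, hence exactly, `n - x`. Among all assignments with total overflow at
most `n - x`, one minimising the sum of the ranks of the assigned houses is, under the
capacities raised by its own overflow, a perfect matching that no matching Pareto-dominates: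
a Pareto improvement would again be such an assignment, with a smaller rank sum.
-/

namespace HA

variable {A H : Type*}

lemma exists_eq_some_of_perfect {M : A → Option H} (hM : Perfect M) :
    ∃ N : A → H, M = fun a => some (N a) :=
  ⟨fun a => (M a).get (hM a), funext fun a => (Option.some_get (hM a)).symm⟩

variable [Fintype A]

def overflow (I : HA A H) (N : A → H) (h : H) : ℕ := #{a | N a = h} - I.cap h

def rankSum (I : HA A H) (N : A → H) : ℕ := ∑ a, (I.pref a).idxOf (N a)

lemma isMatching_some_iff {I : HA A H} {N : A → H} :
    I.IsMatching (fun a => some (N a)) ↔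
      (∀ a, N a ∈ I.pref a) ∧ ∀ h, #{a | N a = h} ≤ I.cap h := by
  simp [IsMatching]

lemma overflow_le_of_isMatching (I : HA A H) {c : H → ℕ} {N : A → H}
    (hN : (HA.mk I.pref c).IsMatching fun a => some (N a)) (h : H) :
    I.overflow N h ≤ c h - I.cap h := by
  have : #{a | N a = h} ≤ c h := (isMatching_some_iff.1 hN).2 h
  unfold overflow
  omega

lemma isMatching_cap_add_overflow (I : HA A H) {N : A → H} (hN : ∀ a, N a ∈ I.pref a) :
    (HA.mk I.pref fun h => I.cap h + I.overflow N h).IsMatching fun a => some (N a) :=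
  isMatching_some_iff.2 ⟨hN, fun h => show _ ≤ I.cap h + _ by unfold overflow; omega⟩

variable [Fintype H]

lemma exists_isMatching_size_add_overflow (I : HA A H) {N : A → H}
    (hN : ∀ a, N a ∈ I.pref a) :
    ∃ M, I.IsMatching M ∧ size M + ∑ h, I.overflow N h = Fintype.card A := by
  have hS : ∀ h, ∃ S ⊆ ({a | N a = h} : Finset A), #S = min #{a | N a = h} (I.cap h) :=
    fun h => exists_subset_card_eq (min_le_left _ _)
  choose S hSsub hScard using hS
  have hNS : ∀ {a h}, a ∈ S h → N a = h := fun ha => by simpa using hSsub _ ha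
  let M : A → Option H := fun a => if a ∈ S (N a) then some (N a) else none
  have hM : ∀ a h, M a = some h ↔ a ∈ S h := by
    intro a h
    by_cases ha : a ∈ S (N a)
    · simp only [M, ha, if_true, Option.some.injEq]
      exact ⟨fun hah => hah ▸ ha, hNS⟩
    · simp only [M, ha, if_false, reduceCtorEq, false_iff]
      exact fun hah => ha (hNS hah ▸ hah)
  have hfiber : ∀ h, ({a ∈ ({a | (M a).isSome} : Finset A) | N a = h} : Finset A) = S h := by
    intro h
    ext a
    simp only [mem_filter, mem_univ, true_and, Option.isSome_iff_exists, hM]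
    exact ⟨fun ⟨⟨h', ha⟩, hah⟩ => hah ▸ hNS ha ▸ ha, fun ha => ⟨⟨h, ha⟩, hNS ha⟩⟩
  refine ⟨M, ⟨fun a h hah => hNS ((hM a h).1 hah) ▸ hN a, fun h => ?_⟩, ?_⟩
  · simp only [hM, filter_mem_eq_inter, univ_inter, hScard]
    exact min_le_right _ _
  rw [size, card_eq_sum_card_fiberwise fun a _ => mem_univ (N a), ← sum_add_distrib,
    ← card_univ, card_eq_sum_card_fiberwise fun a _ => mem_univ (N a)]
  refine sum_congr rfl fun h _ => ?_
  rw [hfiber, hScard, overflow]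
  omega

lemma card_le_size_add_overflow {I : HA A H} {M₀ : A → Option H}
    (hmax : ∀ M', I.IsMatching M' → size M' ≤ size M₀) {N : A → H}
    (hN : ∀ a, N a ∈ I.pref a) :
    Fintype.card A ≤ size M₀ + ∑ h, I.overflow N h := by
  obtain ⟨M, hM, hsize⟩ := I.exists_isMatching_size_add_overflow hN
  have := hmax M hM
  omega

lemma exists_sum_overflow_le (I : HA A H) (hacc : ∀ a, I.pref a ≠ [])
    {M₀ : A → Option H} (hM₀ : I.IsMatching M₀) :
    ∃ N : A → H, (∀ a, N a ∈ I.pref a) ∧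
      ∑ h, I.overflow N h ≤ Fintype.card A - size M₀ := by
  let N : A → H := fun a => (M₀ a).getD ((I.pref a).head (hacc a))
  refine ⟨N, fun a => ?_, ?_⟩
  · cases hMa : M₀ a with
    | none => simp [N, hMa, List.head_mem]
    | some h => simp [N, hMa, hM₀.1 a h hMa]
  have hunmatched : Fintype.card A - size M₀ = #{a | M₀ a = none} := by
    rw [← card_univ, ← card_filter_add_card_filter_not (fun a => (M₀ a).isSome), size]
    simp only [Bool.not_eq_true, Option.isSome_eq_false_iff, Option.isNone_iff_eq_none]
    omega
  rw [hunmatched, card_eq_sum_card_fiberwise fun a _ => mem_univ (N a)]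
  refine sum_le_sum fun h _ => ?_
  have hsub : ({a | N a = h} : Finset A) ⊆
      ({a | M₀ a = some h} : Finset A) ∪ {a ∈ ({a | M₀ a = none} : Finset A) | N a = h} := by
    intro a ha
    cases hMa : M₀ a <;> simp_all [N]
  have := (card_le_card hsub).trans (card_union_le _ _)
  have := hM₀.2 h
  unfold overflow
  omega

lemma paretoOptimal_of_rankSum_le (I : HA A H) {N : A → H} (hN : ∀ a, N a ∈ I.pref a)
    (hmin : ∀ N' : A → H, (∀ a, N' a ∈ I.pref a) →
      ∑ h, I.overflow N' h ≤ ∑ h, I.overflow N h → I.rankSum N ≤ I.rankSum N') :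
    (HA.mk I.pref fun h => I.cap h + I.overflow N h).ParetoOptimal fun a => some (N a) := by
  refine ⟨I.isMatching_cap_add_overflow hN, fun M' hM' ⟨hweak, a₀, hstrict⟩ => ?_⟩
  have hrank : ∀ a, ∃ h, M' a = some h ∧ (I.pref a).idxOf h ≤ (I.pref a).idxOf (N a) := by
    intro a
    rcases hweak a with heq | hbetter
    · exact ⟨N a, heq, le_rfl⟩
    · cases hMa : M' a with
      | none => simp [hMa, Better] at hbetter
      | some h => rw [hMa] at hbetter; exact ⟨h, rfl, hbetter.2.le⟩
  choose N' hN'eq hN'rank using hrank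
  obtain rfl : M' = fun a => some (N' a) := funext hN'eq
  have hle : ∑ h, I.overflow N' h ≤ ∑ h, I.overflow N h := sum_le_sum fun h _ =>
    (I.overflow_le_of_isMatching hM' h).trans (Nat.add_sub_cancel_left ..).le
  have hlt : I.rankSum N' < I.rankSum N :=
    sum_lt_sum (fun a _ => hN'rank a) ⟨a₀, mem_univ _, hstrict.2⟩
  exact (hmin N' (isMatching_some_iff.1 hM').1 hle).not_gt hlt

end HA

/-- if every applicant has an acceptable house and `x` is the maximum
cardinality of a matching (witnessed by the maximum matching `M₀`), then
(i) there is a capacity increase vector `r ≥ 0` with `|r|₁ = n - x` such that the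
instance with capacities `q + r` admits a perfect and Pareto-optimal matching, and
(ii) for every capacity change vector `r` with `|r|₁ < n - x`, the instance with
capacities `q + r` admits no perfect matching. -/
theorem minSum_pareto_perfect {A H : Type*} [Fintype A] [Fintype H] (I : HA A H)
    (hacc : ∀ a, I.pref a ≠ [])
    (M₀ : A → Option H) (hM₀ : I.IsMatching M₀)
    (hmax : ∀ M', I.IsMatching M' → HA.size M' ≤ HA.size M₀) :
    (∃ r : H → ℕ, (∑ h, r h) = Fintype.card A - HA.size M₀ ∧
      ∃ M, (HA.mk I.pref fun h => I.cap h + r h).IsMatching M ∧ HA.Perfect M ∧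
        (HA.mk I.pref fun h => I.cap h + r h).ParetoOptimal M) ∧
    (∀ r : H → ℤ, (∀ h, 0 ≤ (I.cap h : ℤ) + r h) →
      (∑ h, (r h).natAbs) < Fintype.card A - HA.size M₀ →
      ¬ ∃ M, (HA.mk I.pref fun h => ((I.cap h : ℤ) + r h).toNat).IsMatching M ∧
        HA.Perfect M) := by
  constructor
  · obtain ⟨N₀, hN₀, hN₀le⟩ := I.exists_sum_overflow_le hacc hM₀
    obtain ⟨N, hN, hNmin⟩ :=
      ({N | (∀ a, N a ∈ I.pref a) ∧ ∑ h, I.overflow N h ≤ Fintype.card A - HA.size M₀} :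
        Finset (A → H)).exists_min_image I.rankSum ⟨N₀, by simp [hN₀, hN₀le]⟩
    simp only [mem_filter, mem_univ, true_and] at hN hNmin
    have hsum : ∑ h, I.overflow N h = Fintype.card A - HA.size M₀ := by
      have := HA.card_le_size_add_overflow hmax hN.1
      omega
    refine ⟨I.overflow N, hsum, _, I.isMatching_cap_add_overflow hN.1, fun _ => rfl,
      I.paretoOptimal_of_rankSum_le hN.1 fun N' hN' hle => hNmin N' ⟨hN', hle.trans hN.2⟩⟩
  · rintro r - hr ⟨M, hM, hperf⟩
    obtain ⟨N, rfl⟩ := HA.exists_eq_some_of_perfect hperf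
    have hle : ∑ h, I.overflow N h ≤ ∑ h, (r h).natAbs :=
      sum_le_sum fun h _ => (I.overflow_le_of_isMatching hM h).trans (by omega)
    have := HA.card_le_size_add_overflow hmax (HA.isMatching_some_iff.1 hM).1
    omega
end
end

section
/- Let I = (A, H, (≻_a), q) be a capacitated house allocation instance. Call a matching M of I admissible if: every edge of M lies in the first/second-choice multigraph G' of the instance; every house h that has at least q[h] admirers is matched in M to exactly q[h] applicants, all of whom are admirers of h; and every house h that has at most q[h] admirers has all of its admirers matched to it in M. Let x be the maximum cardinality of an admissible matching of I, and let I⁺ be the instance obtained from I by increasing the capacity of one house by one (note that the first/second-choice multigraph of I⁺ may differ from G'). Then the maximum cardinality of an admissible matching of I⁺ is at most x + 1. -/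
noncomputable section

open Finset

attribute [local instance] Classical.propDecidable

/-!
Admirers depend only on the preference lists, so `I` and `I⁺` have the same admirers, and raising
the capacity of `h₀` changes `G'` only through edges into `h₀`. Admissibility splits into a
condition on the edges and, at each house, a condition on the set of its occupants. For an
admissible matching of `I⁺`, unmatching at most one occupant of `h₀` turns the occupancy condition
for capacity `c + 1` into the one for capacity `c`. A non-admirer can then stay at `h₀` only if
`h₀` has fewer than `c` admirers, so its edge to `h₀` is in `G'` for `I` as well, and the smaller
matching is admissible in `I`.
-/

theorem List.find?_eq_some_of_imp {α : Type*} {p q : α → Bool} {l : List α} {x : α}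
    (hpq : ∀ y, p y → q y) (hq : l.find? q = some x) (hp : p x) : l.find? p = some x := by
  obtain ⟨-, as, bs, rfl, has⟩ := List.find?_eq_some_iff_append.1 hq
  refine List.find?_eq_some_iff_append.2 ⟨hp, as, bs, rfl, fun y hy => ?_⟩
  have hqy := has y hy
  cases hpy : p y
  · rfl
  · simp [hpq y hpy] at hqy

namespace HA

/-- The house-local part of admissibility, for a house with admirers `adm`, capacity `c` and
occupants `S`. -/
def AdmissibleOccupancy {α : Type*} (adm S : Finset α) (c : ℕ) : Prop :=
  (c ≤ adm.card ∧ S ⊆ adm ∧ S.card = c) ∨ (adm.card < c ∧ adm ⊆ S ∧ S.card ≤ c)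

namespace AdmissibleOccupancy

variable {α : Type*} {adm S : Finset α} {c : ℕ}

theorem card_le (hS : AdmissibleOccupancy adm S c) : S.card ≤ c := by
  rcases hS with ⟨-, -, h⟩ | ⟨-, -, h⟩ <;> omega

theorem card_eq_and_subset (hS : AdmissibleOccupancy adm S c) (hc : c ≤ adm.card) :
    S.card = c ∧ S ⊆ adm := by
  rcases hS with ⟨-, hsub, hcard⟩ | ⟨hlt, -, -⟩
  · exact ⟨hcard, hsub⟩
  · omega

theorem admirers_subset (hS : AdmissibleOccupancy adm S c) (hc : adm.card ≤ c) : adm ⊆ S := by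
  rcases hS with ⟨-, hsub, hcard⟩ | ⟨-, hsub, -⟩
  · exact (eq_of_subset_of_card_le hsub (by omega)).ge
  · exact hsub

theorem exists_subset_of_succ (hS : AdmissibleOccupancy adm S (c + 1)) :
    ∃ S' ⊆ S, S.card ≤ S'.card + 1 ∧ AdmissibleOccupancy adm S' c := by
  rcases hS with ⟨hc, hSadm, hcard⟩ | ⟨hc, hadmS, hcard⟩
  · obtain ⟨S', -, hS'S, hS'⟩ :=
      exists_subsuperset_card_eq (empty_subset S) (by simp) (by omega : c ≤ S.card)
    exact ⟨S', hS'S, by omega, Or.inl ⟨by omega, hS'S.trans hSadm, hS'⟩⟩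
  · obtain ⟨S', hadmS', hS'S, hS'⟩ := exists_subsuperset_card_eq hadmS
      (le_min (card_le_card hadmS) (by omega)) (min_le_left S.card c)
    have := card_le_card hadmS
    refine ⟨S', hS'S, by omega, ?_⟩
    rcases (Nat.lt_succ_iff.1 hc).lt_or_eq with hlt | heq
    · exact Or.inr ⟨hlt, hadmS', by omega⟩
    · exact Or.inl ⟨heq.ge, (eq_of_subset_of_card_le hadmS' (by omega)).ge, by omega⟩

end AdmissibleOccupancy

variable {A H : Type*} {I : HA A H} {M : A → Option H} {a : A} {h : H}

def raiseCap (I : HA A H) (h₀ : H) : HA A H :=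
  ⟨I.pref, fun h => if h = h₀ then I.cap h + 1 else I.cap h⟩

variable {h₀ : H}

@[simp]
theorem raiseCap_cap_self : (I.raiseCap h₀).cap h₀ = I.cap h₀ + 1 := if_pos rfl

theorem raiseCap_cap_of_ne (hh : h ≠ h₀) : (I.raiseCap h₀).cap h = I.cap h := if_neg hh

theorem cap_le_raiseCap_cap (h : H) : I.cap h ≤ (I.raiseCap h₀).cap h := by
  by_cases hh : h = h₀
  · subst hh
    simp
  · rw [raiseCap_cap_of_ne hh]

def unmatch (M : A → Option H) (T : Finset A) : A → Option H :=
  fun a => if a ∈ T then none else M a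

variable {T : Finset A}

theorem unmatch_eq_some : unmatch M T a = some h ↔ a ∉ T ∧ M a = some h := by
  unfold unmatch
  split_ifs <;> simp_all

variable [Fintype A]

@[simp]
theorem mem_matchedTo : a ∈ matchedTo M h ↔ M a = some h := by
  simp [matchedTo]

@[simp]
theorem mem_admirers : a ∈ I.admirers h ↔ I.fOpt a = some h := by
  simp [admirers]

theorem disjoint_matchedTo {h' : H} (hh : h ≠ h') :
    Disjoint (matchedTo M h) (matchedTo M h') :=
  disjoint_left.2 fun _ ha ha' => hh <| Option.some_injective _ <|
    (mem_matchedTo.1 ha).symm.trans (mem_matchedTo.1 ha')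

@[simp]
theorem admirers_mk_pref (cap' : H → ℕ) : (HA.mk I.pref cap').admirers = I.admirers := rfl

theorem sOpt_eq_some (hs : I.sOpt a = some h) :
    h ∈ I.pref a ∧ (I.fOpt a = some h ∨ (I.admirers h).card < I.cap h) := by
  unfold sOpt at hs
  cases hp : I.pref a with
  | nil => simp [hp] at hs
  | cons h₁ t =>
    simp only [hp, List.head?_cons] at hs
    split_ifs at hs
    · cases hs
      simp [fOpt, hp]
    · exact ⟨List.mem_of_find?_eq_some hs, Or.inr (by simpa using List.find?_some hs)⟩

theorem mem_pref_of_inG' (hG : I.InG' a h) : h ∈ I.pref a :=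
  hG.elim List.mem_of_mem_head? fun hs => (sOpt_eq_some hs).1

/-- The search for `s(a)` with the larger capacities `cap'` stops at `h`; with the capacities of
`I` its predicate is stronger but still holds at `h`, so it stops there too. -/
theorem inG'_of_sOpt_mk_pref {cap' : H → ℕ} (hcap : ∀ h, I.cap h ≤ cap' h)
    (hs : (HA.mk I.pref cap').sOpt a = some h) (hlt : (I.admirers h).card < I.cap h) :
    I.InG' a h := by
  unfold sOpt at hs
  cases hp : I.pref a with
  | nil => simp [hp] at hs
  | cons h₁ t =>
    simp only [hp, List.head?_cons, admirers_mk_pref] at hs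
    split_ifs at hs with h₁cap
    · cases hs
      exact Or.inl (by simp [fOpt, hp])
    · have hnot : ¬ (I.admirers h₁).card ≤ I.cap h₁ := fun hle => h₁cap (hle.trans (hcap h₁))
      right
      simp only [sOpt, hp, List.head?_cons, if_neg hnot]
      refine List.find?_eq_some_of_imp (fun x hx => ?_) hs (by simpa using hlt)
      exact decide_eq_true ((of_decide_eq_true hx).trans_le (hcap x))

theorem inG'_of_inG'_raiseCap (hG : (I.raiseCap h₀).InG' a h)
    (hlt : h = h₀ → I.fOpt a ≠ some h → (I.admirers h).card < I.cap h) : I.InG' a h := by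
  by_cases hfa : I.fOpt a = some h
  · exact Or.inl hfa
  have hs : (I.raiseCap h₀).sOpt a = some h := hG.resolve_left hfa
  refine inG'_of_sOpt_mk_pref cap_le_raiseCap_cap hs ?_
  by_cases hh : h = h₀
  · exact hlt hh hfa
  · have hlt' := (sOpt_eq_some hs).2.resolve_left hfa
    rwa [raiseCap_cap_of_ne hh] at hlt'

theorem admissible_iff : I.Admissible M ↔ (∀ a h, M a = some h → I.InG' a h) ∧
    ∀ h, AdmissibleOccupancy (I.admirers h) (matchedTo M h) (I.cap h) := by
  constructor
  · rintro ⟨⟨-, hcap⟩, hG, hover, hunder⟩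
    refine ⟨hG, fun h => ?_⟩
    rcases le_or_gt (I.cap h) (I.admirers h).card with hc | hc
    · obtain ⟨hcard, hadm⟩ := hover h hc
      exact Or.inl ⟨hc, fun a ha => mem_admirers.2 (hadm a ha), hcard⟩
    · exact Or.inr ⟨hc, fun a ha => mem_matchedTo.2 (hunder h hc.le a ha), hcap h⟩
  · rintro ⟨hG, hocc⟩
    refine ⟨⟨fun a h ha => mem_pref_of_inG' (hG a h ha), fun h => (hocc h).card_le⟩, hG,
      fun h hc => ?_, fun h hc a ha => mem_matchedTo.1 ((hocc h).admirers_subset hc ha)⟩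
    obtain ⟨hcard, hsub⟩ := (hocc h).card_eq_and_subset hc
    exact ⟨hcard, fun a ha => mem_admirers.1 (hsub ha)⟩

theorem matchedTo_unmatch : matchedTo (unmatch M T) h = matchedTo M h \ T := by
  ext a
  simp [unmatch_eq_some, and_comm]

theorem size_le_size_unmatch_add_card : size M ≤ size (unmatch M T) + T.card := by
  unfold size
  refine (card_le_card fun a ha => ?_).trans (card_union_le _ T)
  by_cases haT : a ∈ T
  · exact mem_union_right _ haT
  · rw [mem_filter] at ha
    exact mem_union_left _ (mem_filter.2 ⟨mem_univ a, by simpa [unmatch, haT] using ha.2⟩)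

theorem admissible_unmatch_of_raiseCap (hM : (I.raiseCap h₀).Admissible M)
    (hT : T ⊆ matchedTo M h₀)
    (hocc : AdmissibleOccupancy (I.admirers h₀) (matchedTo M h₀ \ T) (I.cap h₀)) :
    I.Admissible (unmatch M T) := by
  obtain ⟨hG, hocc'⟩ := admissible_iff.1 hM
  refine admissible_iff.2 ⟨fun a h ha => ?_, fun h => ?_⟩
  · obtain ⟨haT, ha⟩ := unmatch_eq_some.1 ha
    refine inG'_of_inG'_raiseCap (hG a h ha) fun hh hfa => ?_
    subst hh
    rcases hocc with ⟨-, hsub, -⟩ | ⟨hlt, -, -⟩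
    · exact absurd (mem_admirers.1 (hsub (mem_sdiff.2 ⟨mem_matchedTo.2 ha, haT⟩))) hfa
    · exact hlt
  · rw [matchedTo_unmatch]
    by_cases hh : h = h₀
    · subst hh
      exact hocc
    · rw [sdiff_eq_self_of_disjoint ((disjoint_matchedTo hh).mono_right hT),
        ← raiseCap_cap_of_ne hh]
      exact hocc' h

theorem exists_admissible_of_raiseCap (hM : (I.raiseCap h₀).Admissible M) :
    ∃ N, I.Admissible N ∧ size M ≤ size N + 1 := by
  have hocc := (admissible_iff.1 hM).2 h₀
  rw [raiseCap_cap_self] at hocc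
  obtain ⟨S', hS'S, hcard, hocc'⟩ := hocc.exists_subset_of_succ
  refine ⟨unmatch M (matchedTo M h₀ \ S'), admissible_unmatch_of_raiseCap hM sdiff_subset ?_, ?_⟩
  · rwa [Finset.sdiff_sdiff_eq_self hS'S]
  · have := card_sdiff_of_subset hS'S
    have := size_le_size_unmatch_add_card (M := M) (T := matchedTo M h₀ \ S')
    omega

end HA

theorem admissible_max_card_increase_general {A H : Type*} [Fintype A] (I : HA A H) (h₀ : H)
    (M : A → Option H)
    (hmax : ∀ M', I.Admissible M' → HA.size M' ≤ HA.size M) :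
    ∀ M', (HA.mk I.pref fun h => if h = h₀ then I.cap h + 1 else I.cap h).Admissible M' →
      HA.size M' ≤ HA.size M + 1 := by
  intro M' hM'
  obtain ⟨N, hN, hsize⟩ := HA.exists_admissible_of_raiseCap (h₀ := h₀) hM'
  exact hsize.trans (Nat.add_le_add_right (hmax N hN) 1)

/-- if `M` is a maximum-cardinality admissible matching of `I` and `I⁺` is
obtained from `I` by increasing the capacity of one house `h₀` by one (admissibility of
matchings of `I⁺` being taken with respect to the first/second-choice multigraph and
admirers of `I⁺`), then every admissible matching of `I⁺` has cardinality at most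
`|M| + 1`. -/
theorem admissible_max_card_increase {A H : Type*} [Fintype A] (I : HA A H) (h₀ : H)
    (M : A → Option H) (hM : I.Admissible M)
    (hmax : ∀ M', I.Admissible M' → HA.size M' ≤ HA.size M) :
    ∀ M', (HA.mk I.pref fun h => if h = h₀ then I.cap h + 1 else I.cap h).Admissible M' →
      HA.size M' ≤ HA.size M + 1 :=
  admissible_max_card_increase_general I h₀ M hmax
end
end

section
/- Fix n ∈ ℕ and consider the capacitated house allocation instance with houses h_1, h_2, h_3 of capacities q[h_1] = 1, q[h_2] = 2, q[h_3] = n + 1, applicants a_1,…,a_{n+2} each with preference h_1 ≻ h_2 ≻ h_3, and an applicant b with preference h_2 ≻ h_1. After decreasing the capacity of h_2 by one (so that q'[h_2] = 1, all other capacities unchanged), the matching M = {(a_1, h_1), (b, h_2)} ∪ {(a_i, h_3) : i = 2,…,n+2} is a perfect popular matching of the modified instance. -/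
noncomputable section

open Finset

attribute [local instance] Classical.propDecidable

/-- The example instance: houses `h₁ = 0, h₂ = 1, h₃ = 2` with capacities `c 0, c 1, c 2`;
applicants `a_1, …, a_{n+2}` (the `Sum.inl` applicants, `a_i = Sum.inl (i - 1)`) each with
preference `h₁ ≻ h₂ ≻ h₃`, and an applicant `b` (the `Sum.inr` applicant) with
preference `h₂ ≻ h₁`. -/
def exampleInstance (n : ℕ) (c : Fin 3 → ℕ) : HA (Fin (n + 2) ⊕ Unit) (Fin 3) where
  pref := fun a =>
    match a with
    | Sum.inl _ => [0, 1, 2]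
    | Sum.inr _ => [1, 0]
  cap := c

/-!
An applicant can only gain over `M` by moving to `h₁` or `h₂`. Both houses have capacity one
and are held in `M` by an applicant for whom they are the top choice (`a₁` and `b`), so every
applicant who gains in a rival matching `M'` evicts a distinct applicant who loses.
-/

namespace Better

variable {H : Type*} {l : List H} {x y : Option H} {h : H}

theorem ne (hxy : Better l x y) : x ≠ y := by
  rintro rfl
  rcases x with _ | x
  · exact hxy
  · exact lt_irrefl _ hxy.2

theorem exists_eq_some (hxy : Better l x y) : ∃ h, x = some h := by
  rcases x with _ | h
  · exact hxy.elim
  · exact ⟨h, rfl⟩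

theorem of_head?_eq (hl : l.head? = some h) (hx : x ≠ some h) : Better l (some h) x := by
  obtain ⟨t, rfl⟩ : ∃ t, l = h :: t := List.head?_eq_some_iff.mp hl
  rcases x with _ | y
  · exact List.mem_cons_self
  · have hy : y ≠ h := fun hyh => hx (congrArg some hyh)
    refine ⟨List.mem_cons_self, ?_⟩
    rw [List.idxOf_cons_self, List.idxOf_cons_ne t hy.symm]
    exact Nat.succ_pos _

theorem not_of_head?_eq (hl : l.head? = some h) : ¬ Better l x (some h) := by
  obtain ⟨t, rfl⟩ : ∃ t, l = h :: t := List.head?_eq_some_iff.mp hl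
  rcases x with _ | y
  · exact id
  · rintro ⟨-, hlt⟩
    rw [List.idxOf_cons_self] at hlt
    exact Nat.not_lt_zero _ hlt

end Better

namespace HA

variable {A H : Type*} [Fintype A] {I : HA A H} {M M' : A → Option H}

theorem IsMatching.eq_of_cap_le_one (hM : I.IsMatching M) {h : H} (hh : I.cap h ≤ 1)
    {a b : A} (ha : M a = some h) (hb : M b = some h) : a = b :=
  card_le_one.mp ((hM.2 h).trans hh) a (by simp [ha]) b (by simp [hb])

theorem isMatching_of_occupants_subset (hacc : ∀ a h, M a = some h → h ∈ I.pref a)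
    (occ : H → Finset A) (hocc : ∀ a h, M a = some h → a ∈ occ h)
    (hcard : ∀ h, (occ h).card ≤ I.cap h) : I.IsMatching M :=
  ⟨hacc, fun h => (card_le_card fun a ha => hocc a h (mem_filter.mp ha).2).trans (hcard h)⟩

theorem popular_of_envied_houses_held_as_top_choice (hM : I.IsMatching M) (owner : H → A)
    (howner : ∀ a h, Better (I.pref a) (some h) (M a) →
      I.cap h ≤ 1 ∧ M (owner h) = some h ∧ I.fOpt (owner h) = some h) :
    I.Popular M := by
  refine ⟨hM, fun M' hM' hdom => (not_lt.mpr ?_) hdom⟩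
  have hgain : ∀ a, Better (I.pref a) (M' a) (M a) → ∃ h, M' a = some h ∧
      I.cap h ≤ 1 ∧ M (owner h) = some h ∧ I.fOpt (owner h) = some h := by
    intro a ha
    obtain ⟨h, hh⟩ := ha.exists_eq_some
    exact ⟨h, hh, howner a h (hh ▸ ha)⟩
  refine card_le_card_of_injOn (fun a => (M' a).elim a owner) ?_ ?_
  · intro a ha
    simp only [coe_filter, mem_univ, true_and, Set.mem_ofPred_eq] at ha ⊢
    obtain ⟨h, hh, hcap, hown, htop⟩ := hgain a ha
    rw [hh, Option.elim_some, hown]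
    refine Better.of_head?_eq htop fun hevict => ha.ne ?_
    rw [hh, ← hown, hM'.eq_of_cap_le_one hcap hh hevict]
  · intro a ha b hb hab
    simp only [coe_filter, mem_univ, true_and, Set.mem_ofPred_eq] at ha hb
    obtain ⟨h, hh, hcap, hown, -⟩ := hgain a ha
    obtain ⟨k, hk, -, hkown, -⟩ := hgain b hb
    simp only [hh, hk, Option.elim_some] at hab
    obtain rfl : h = k := Option.some_injective _ (hown.symm.trans (hab ▸ hkown))
    exact hM'.eq_of_cap_le_one hcap hh hk

end HA

def exampleMatching (n : ℕ) : Fin (n + 2) ⊕ Unit → Option (Fin 3)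
  | Sum.inl i => if i = 0 then some 0 else some 2
  | Sum.inr _ => some 1

theorem exampleMatching_perfect (n : ℕ) : HA.Perfect (exampleMatching n) := by
  rintro (i | u)
  · by_cases hi : i = 0 <;> simp [exampleMatching, hi]
  · rfl

theorem exampleMatching_isMatching (n : ℕ) :
    (exampleInstance n ![1, 1, n + 1]).IsMatching (exampleMatching n) := by
  refine HA.isMatching_of_occupants_subset ?_
    ![{Sum.inl 0}, {Sum.inr ()}, (univ.erase (Sum.inl 0)).erase (Sum.inr ())] ?_ ?_
  · rintro (i | u) h hh
    · fin_cases h <;> simp [exampleInstance]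
    · obtain rfl : 1 = h := Option.some_injective _ hh
      simp [exampleInstance]
  · rintro (i | u) h hh
    · by_cases hi : i = 0 <;> simp only [exampleMatching, hi, if_true, if_false] at hh <;>
        cases hh <;> simp [hi]
    · cases hh
      simp
  · intro h
    fin_cases h <;> simp [card_erase_of_mem, exampleInstance]

theorem exampleMatching_envied_ne_two (n : ℕ) {a : Fin (n + 2) ⊕ Unit} {h : Fin 3}
    (ha : Better ((exampleInstance n ![1, 1, n + 1]).pref a) (some h) (exampleMatching n a)) :
    h ≠ 2 := by
  rcases a with i | u
  · by_cases hi : i = 0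
    · simp only [exampleMatching, hi, if_true] at ha
      exact (Better.not_of_head?_eq rfl ha).elim
    · simp only [exampleMatching, hi, if_false] at ha
      exact fun h2 => ha.ne (congrArg some h2)
  · exact (Better.not_of_head?_eq rfl ha).elim

theorem exampleMatching_popular (n : ℕ) :
    (exampleInstance n ![1, 1, n + 1]).Popular (exampleMatching n) := by
  -- `h₃` is never envied, so the owner assigned to it is irrelevant.
  refine HA.popular_of_envied_houses_held_as_top_choice (exampleMatching_isMatching n)
    ![Sum.inl 0, Sum.inr (), Sum.inl 0] fun a h ha => ?_
  have h2 := exampleMatching_envied_ne_two n ha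
  fin_cases h <;> simp_all [exampleMatching, exampleInstance, HA.fOpt]

/-- after decreasing the capacity of `h₂` from 2 to 1 (so that the
capacities are `1, 1, n + 1`), the matching `M = {(a₁, h₁), (b, h₂)} ∪
{(a_i, h₃) : i = 2, …, n + 2}` is a perfect popular matching of the modified instance. -/
theorem decrease_gives_perfect_popular (n : ℕ) :
    let M : (Fin (n + 2) ⊕ Unit) → Option (Fin 3) := fun a =>
      match a with
      | Sum.inl i => if i = 0 then some 0 else some 2
      | Sum.inr _ => some 1
    HA.Perfect M ∧ (exampleInstance n ![1, 1, n + 1]).Popular M :=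
  ⟨exampleMatching_perfect n, exampleMatching_popular n⟩
end
end
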